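/- arXiv:2001.06795 — 3 statements merged into one kernel-verified Lean document; each statement's English description precedes it below -/
import Mathlib

section
/- Let α and β be irrational numbers. Then there exist continuous functions f, g ∈ C(𝕋) with (I−T_α)f = (I−T_β)g =: ψ (so ψ is a joint coboundary of T_α and T_β in C(𝕋)), such that there is no h ∈ L_1(𝕋) satisfying (I−T_α)(I−T_β)h = ψ almost everywhere; in particular ψ is not a double coboundary in L_1(𝕋). -/
open MeasureTheory


namespace Stmt12Aux

open AddCircle Filter

local notation "𝕋" => UnitAddCircle

lemma norm_fourier_val (n : ℤ) (x : 𝕋) : ‖(fourier n x : ℂ)‖ = 1 := by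
  rw [fourier_apply]; exact Circle.norm_coe _

lemma nnnorm_fourier_val (n : ℤ) (x : 𝕋) : ‖(fourier n x : ℂ)‖₊ = 1 :=
  NNReal.coe_injective (by rw [coe_nnnorm, norm_fourier_val]; simp)

lemma fourier_add_arg (n : ℤ) (x y : 𝕋) :
    fourier n (x + y) = fourier n x * fourier n y := by
  simp [fourier_apply, smul_add, toCircle_add]

lemma toCircle_zero_val : (toCircle (0 : 𝕋) : ℂ) = 1 := @fourier_zero' 1

lemma fourier_eq_one_imp {m : ℤ} {x : 𝕋} (h : fourier m x = 1) : m • x = 0 := by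
  apply injective_toCircle (one_ne_zero : (1:ℝ) ≠ 0)
  apply Subtype.ext
  have h1 : (toCircle (m • x) : ℂ) = 1 := by rw [← fourier_apply]; exact h
  rw [h1, toCircle_zero_val]

lemma fourier_ne_one {α : ℝ} (hα : Irrational α) {m : ℤ} (hm : m ≠ 0) :
    fourier m ((α : ℝ) : 𝕋) ≠ 1 := by
  intro h
  have h0 := fourier_eq_one_imp h
  rw [← QuotientAddGroup.mk_zsmul, AddCircle.coe_eq_zero_iff] at h0
  obtain ⟨k, hk⟩ := h0
  have h1 : (k : ℝ) = m * α := by simpa using hk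
  have hm' : (m : ℝ) ≠ 0 := Int.cast_ne_zero.mpr hm
  have h2 : α = ((k / m : ℚ) : ℝ) := by
    push_cast
    field_simp
    linarith
  exact Rat.not_irrational _ (h2 ▸ hα)

lemma integral_fourier (m : ℤ) :
    ∫ x : 𝕋, (fourier m x : ℂ) = if m = 0 then 1 else 0 := by
  split_ifs with h
  · subst h
    have : ∀ x : 𝕋, (fourier 0 x : ℂ) = 1 := fun x => fourier_zero
    simp_rw [this]
    simp [integral_const, AddCircle.measure_univ, measureReal_def]
  · exact integral_eq_zero_of_add_right_eq_neg (fourier_add_half_inv_index h one_pos)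

lemma integral_fourier_translate (m : ℤ) (h : 𝕋 → ℂ) (γ : 𝕋) :
    ∫ x, (fourier (-m) x : ℂ) * h (x + γ) = fourier m γ * ∫ x, (fourier (-m) x : ℂ) * h x := by
  have e1 : ∀ x : 𝕋, (fourier (-m) x : ℂ) * h (x + γ)
      = (fun y => (fourier (-m) (y + -γ) : ℂ) * h y) (x + γ) := by
    intro x
    simp [add_assoc]
  simp_rw [e1]
  rw [integral_add_right_eq_self (fun y => (fourier (-m) (y + -γ) : ℂ) * h y) γ]
  have e2 : ∀ y : 𝕋, (fourier (-m) (y + -γ) : ℂ) * h y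
      = fourier m γ * ((fourier (-m) y : ℂ) * h y) := by
    intro y
    rw [fourier_add_arg]
    have h3 : (fourier (-m) (-γ) : ℂ) = fourier m γ := by
      simp [fourier_apply, neg_smul, smul_neg]
    rw [h3]; ring
  simp_rw [e2]
  exact integral_const_mul _ _

/-- Subadditivity of `t ↦ ‖toCircle t - 1‖` along sums. -/
lemma norm_toCircle_sum_le (N : ℕ) (c : ℕ → ℤ) (A : 𝕋) :
    ‖(toCircle ((∑ i ∈ Finset.range N, c i) • A) : ℂ) - 1‖
      ≤ ∑ i ∈ Finset.range N, ‖(toCircle (c i • A) : ℂ) - 1‖ := by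
  induction N with
  | zero => simp [toCircle_zero_val]
  | succ N ih =>
      rw [Finset.sum_range_succ, Finset.sum_range_succ, add_zsmul]
      set S : ℂ := (toCircle ((∑ i ∈ Finset.range N, c i) • A) : ℂ)
      set a : ℂ := (toCircle (c N • A) : ℂ)
      have hmul : (toCircle ((∑ i ∈ Finset.range N, c i) • A + c N • A) : ℂ) = S * a := by
        rw [toCircle_add]; rfl
      have hS : ‖S‖ = 1 := Circle.norm_coe _
      have ha : ‖a‖ = 1 := Circle.norm_coe _
      calc ‖(toCircle ((∑ i ∈ Finset.range N, c i) • A + c N • A) : ℂ) - 1‖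
          = ‖(S - 1) * a + (a - 1)‖ := by rw [hmul]; ring_nf
        _ ≤ ‖(S - 1) * a‖ + ‖a - 1‖ := norm_add_le _ _
        _ = ‖S - 1‖ + ‖a - 1‖ := by rw [norm_mul, ha, mul_one]
        _ ≤ (∑ i ∈ Finset.range N, ‖(toCircle (c i • A) : ℂ) - 1‖) + ‖a - 1‖ := by
            exact add_le_add_left ih _

/-- Simultaneous approximation: arbitrarily large integers `m` making both
`fourier m A` and `fourier m B` close to `1`. -/
lemma key_approx (A B : 𝕋) {ε : ℝ} (hε : 0 < ε) (M : ℤ) :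
    ∃ m : ℤ, M < m ∧ ‖(fourier m A : ℂ) - 1‖ < ε ∧ ‖(fourier m B : ℂ) - 1‖ < ε := by
  classical
  set u : ℕ → 𝕋 × 𝕋 := fun j => (((j : ℤ)) • A, ((j : ℤ)) • B) with hu
  obtain ⟨x, -, φ, hφ, hconv⟩ := isCompact_univ.tendsto_subseq (fun j => Set.mem_univ (u j))
  -- the differences of the convergent subsequence give simultaneous recurrence to 0
  set d : ℕ → ℤ := fun j => (φ (j + 1) : ℤ) - (φ j : ℤ) with hd
  have hd1 : ∀ j, 1 ≤ d j := fun j => by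
    have h2 := hφ (Nat.lt_succ_self j)
    simp only [hd, Nat.succ_eq_add_one] at h2 ⊢
    omega
  have h1 : Tendsto (fun j => u (φ (j + 1))) atTop (nhds x) :=
    hconv.comp (tendsto_add_atTop_nat 1)
  have hA0 : Tendsto (fun j => (d j) • A) atTop (nhds 0) := by
    have : ∀ j, (d j) • A = (u (φ (j + 1))).1 - (u (φ j)).1 := by
      intro j; simp only [hd, hu, sub_eq_add_neg, add_zsmul, neg_zsmul]
    simp_rw [this]
    have := (((continuous_fst.tendsto x).comp h1).sub ((continuous_fst.tendsto x).comp hconv))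
    simpa using this
  have hB0 : Tendsto (fun j => (d j) • B) atTop (nhds 0) := by
    have : ∀ j, (d j) • B = (u (φ (j + 1))).2 - (u (φ j)).2 := by
      intro j; simp only [hd, hu, sub_eq_add_neg, add_zsmul, neg_zsmul]
    simp_rw [this]
    have := (((continuous_snd.tendsto x).comp h1).sub ((continuous_snd.tendsto x).comp hconv))
    simpa using this
  -- transfer to the circle via continuity
  have hcont : Continuous (fun t : 𝕋 => ‖(toCircle t : ℂ) - 1‖) :=
    ((continuous_induced_dom.comp continuous_toCircle).sub continuous_const).norm
  set N : ℕ := M.toNat + 1 with hN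
  have hNpos : 0 < N := Nat.succ_pos _
  have hε' : 0 < ε / N := div_pos hε (by exact_mod_cast hNpos)
  have htend : Tendsto (fun j => ‖(toCircle ((d j) • A) : ℂ) - 1‖) atTop (nhds 0) := by
    have := (hcont.tendsto 0).comp hA0
    simpa [toCircle_zero_val, Function.comp_def] using this
  have htendB : Tendsto (fun j => ‖(toCircle ((d j) • B) : ℂ) - 1‖) atTop (nhds 0) := by
    have := (hcont.tendsto 0).comp hB0
    simpa [toCircle_zero_val, Function.comp_def] using this
  obtain ⟨J1, hJ1⟩ := (Metric.tendsto_atTop.mp htend) (ε / N) hε'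
  obtain ⟨J2, hJ2⟩ := (Metric.tendsto_atTop.mp htendB) (ε / N) hε'
  set J : ℕ := max J1 J2 with hJ
  have hJA : ∀ j, J ≤ j → ‖(toCircle ((d j) • A) : ℂ) - 1‖ < ε / N := by
    intro j hj
    have := hJ1 j (le_trans (le_max_left _ _) hj)
    rw [Real.dist_eq] at this
    calc ‖(toCircle ((d j) • A) : ℂ) - 1‖ ≤ |‖(toCircle ((d j) • A) : ℂ) - 1‖ - 0| := by
          rw [sub_zero]; exact le_abs_self _
      _ < ε / N := this
  have hJB : ∀ j, J ≤ j → ‖(toCircle ((d j) • B) : ℂ) - 1‖ < ε / N := by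
    intro j hj
    have := hJ2 j (le_trans (le_max_right _ _) hj)
    rw [Real.dist_eq] at this
    calc ‖(toCircle ((d j) • B) : ℂ) - 1‖ ≤ |‖(toCircle ((d j) • B) : ℂ) - 1‖ - 0| := by
          rw [sub_zero]; exact le_abs_self _
      _ < ε / N := this
  refine ⟨∑ i ∈ Finset.range N, d (J + i), ?_, ?_, ?_⟩
  · have hsum : (N : ℤ) ≤ ∑ i ∈ Finset.range N, d (J + i) := by
      calc (N : ℤ) = ∑ _i ∈ Finset.range N, 1 := by simp
        _ ≤ ∑ i ∈ Finset.range N, d (J + i) := Finset.sum_le_sum fun i _ => hd1 _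
    have : M < (N : ℤ) := by
      have := Int.self_le_toNat M
      omega
    omega
  · rw [fourier_apply]
    calc ‖(toCircle ((∑ i ∈ Finset.range N, d (J + i)) • A) : ℂ) - 1‖
        ≤ ∑ i ∈ Finset.range N, ‖(toCircle (d (J + i) • A) : ℂ) - 1‖ :=
          norm_toCircle_sum_le N (fun i => d (J + i)) A
      _ < ∑ _i ∈ Finset.range N, ε / N :=
          Finset.sum_lt_sum_of_nonempty (Finset.nonempty_range_iff.mpr hNpos.ne')
            (fun i _ => hJA _ (Nat.le_add_right _ _))
      _ = ε := by
          rw [Finset.sum_const, Finset.card_range, nsmul_eq_mul]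
          field_simp
  · rw [fourier_apply]
    calc ‖(toCircle ((∑ i ∈ Finset.range N, d (J + i)) • B) : ℂ) - 1‖
        ≤ ∑ i ∈ Finset.range N, ‖(toCircle (d (J + i) • B) : ℂ) - 1‖ :=
          norm_toCircle_sum_le N (fun i => d (J + i)) B
      _ < ∑ _i ∈ Finset.range N, ε / N :=
          Finset.sum_lt_sum_of_nonempty (Finset.nonempty_range_iff.mpr hNpos.ne')
            (fun i _ => hJB _ (Nat.le_add_right _ _))
      _ = ε := by
          rw [Finset.sum_const, Finset.card_range, nsmul_eq_mul]
          field_simp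


/-- A strictly increasing sequence of positive frequencies along which both characters
approach `1` geometrically fast. -/
lemma exists_freq (A B : 𝕋) :
    ∃ n : ℕ → ℤ, StrictMono n ∧ (∀ k, 0 < n k) ∧
      (∀ k, ‖(fourier (n k) A : ℂ) - 1‖ < (1/2:ℝ)^k) ∧
      (∀ k, ‖(fourier (n k) B : ℂ) - 1‖ < (1/2:ℝ)^k) := by
  have key : ∀ (M : ℤ) (k : ℕ), ∃ m : ℤ, M < m ∧ ‖(fourier m A : ℂ) - 1‖ < (1/2:ℝ)^k ∧
      ‖(fourier m B : ℂ) - 1‖ < (1/2:ℝ)^k :=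
    fun M k => key_approx A B (by positivity) M
  choose F hF1 hF2 hF3 using key
  refine ⟨fun k => Nat.rec (F 0 0) (fun k ih => F ih (k+1)) k, ?_, ?_, ?_, ?_⟩
  · apply strictMono_nat_of_lt_succ
    intro k
    exact hF1 _ (k+1)
  · intro k
    induction k with
    | zero => exact hF1 0 0
    | succ k ih => exact lt_trans ih (hF1 _ (k+1))
  · intro k
    cases k with
    | zero => exact hF2 0 0
    | succ k => exact hF2 _ (k+1)
  · intro k
    cases k with
    | zero => exact hF3 0 0
    | succ k => exact hF3 _ (k+1)

lemma summable_aux : Summable (fun k : ℕ => ((k:ℝ)+1) * (1/2)^k) := by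
  have h1 : Summable (fun k : ℕ => ((k:ℝ))^1 * (1/2)^k) :=
    summable_pow_mul_geometric_of_norm_lt_one 1 (by rw [Real.norm_eq_abs, abs_of_pos] <;> norm_num)
  have h2 : Summable (fun k : ℕ => ((1:ℝ)/2)^k) :=
    summable_geometric_of_lt_one (by norm_num) (by norm_num)
  refine (h1.add h2).congr fun k => by ring

end Stmt12Aux

open Stmt12Aux AddCircle Filter

/-- Let `α` and `β` be irrational numbers. Then there exist continuous
functions `f, g ∈ C(𝕋)` with `(I−T_α)f = (I−T_β)g =: ψ` (so `ψ` is a joint coboundary of `T_α`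
and `T_β` in `C(𝕋)`), such that there is no `h ∈ L_1(𝕋)` satisfying `(I−T_α)(I−T_β)h = ψ`
almost everywhere; in particular `ψ` is not a double coboundary in `L_1(𝕋)`. -/
theorem stmt12 (α β : ℝ) (hα : Irrational α) (hβ : Irrational β) :
    ∃ f g : C(UnitAddCircle, ℂ),
      (∀ x : UnitAddCircle,
        f x - f (x + (α : UnitAddCircle)) = g x - g (x + (β : UnitAddCircle))) ∧
      ¬ ∃ h : UnitAddCircle → ℂ, Integrable h volume ∧
        (fun x => h x - h (x + (α : UnitAddCircle)) - h (x + (β : UnitAddCircle))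
            + h (x + (α : UnitAddCircle) + (β : UnitAddCircle)))
          =ᵐ[volume] fun x => f x - f (x + (α : UnitAddCircle)) := by
  classical
  set A : UnitAddCircle := (α : UnitAddCircle) with hA
  set B : UnitAddCircle := (β : UnitAddCircle) with hB
  obtain ⟨n, hmono, hpos, hboundA, hboundB⟩ := exists_freq A B
  have hne : ∀ k, n k ≠ 0 := fun k => (hpos k).ne'
  -- notation for the basic quantities
  set aA : ℕ → ℝ := fun k => ‖(1:ℂ) - fourier (n k) A‖ with haA
  set aB : ℕ → ℝ := fun k => ‖(1:ℂ) - fourier (n k) B‖ with haB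
  have haAlt : ∀ k, aA k < (1/2:ℝ)^k := fun k => by
    rw [haA]; simpa [norm_sub_rev] using hboundA k
  have haBlt : ∀ k, aB k < (1/2:ℝ)^k := fun k => by
    rw [haB]; simpa [norm_sub_rev] using hboundB k
  have hAne : ∀ k, (1:ℂ) - fourier (n k) A ≠ 0 := fun k =>
    sub_ne_zero_of_ne (Ne.symm (fourier_ne_one hα (hne k)))
  have hBne : ∀ k, (1:ℂ) - fourier (n k) B ≠ 0 := fun k =>
    sub_ne_zero_of_ne (Ne.symm (fourier_ne_one hβ (hne k)))
  have haApos : ∀ k, 0 < aA k := fun k => norm_pos_iff.mpr (hAne k)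
  have haBpos : ∀ k, 0 < aB k := fun k => norm_pos_iff.mpr (hBne k)
  have haAle1 : ∀ k, aA k ≤ 1 := fun k =>
    le_trans (haAlt k).le (by
      calc (1/2:ℝ)^k ≤ 1^k := pow_le_pow_left₀ (by norm_num) (by norm_num) k
        _ = 1 := one_pow k)
  have haBle1 : ∀ k, aB k ≤ 1 := fun k =>
    le_trans (haBlt k).le (by
      calc (1/2:ℝ)^k ≤ 1^k := pow_le_pow_left₀ (by norm_num) (by norm_num) k
        _ = 1 := one_pow k)
  -- the coefficients
  set c : ℕ → ℝ := fun k => ((k:ℝ)+1) * aA k * aB k with hc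
  have hcpos : ∀ k, 0 < c k := fun k =>
    mul_pos (mul_pos (by positivity) (haApos k)) (haBpos k)
  set u : ℕ → ℝ := fun k => ((k:ℝ)+1) * (1/2)^k with hu
  have hcu : ∀ k, c k ≤ u k := by
    intro k
    rw [hc, hu]
    have h1 : aA k ≤ (1/2:ℝ)^k := (haAlt k).le
    have h2 : aB k ≤ 1 := haBle1 k
    have hk1 : (0:ℝ) ≤ (k:ℝ)+1 := by positivity
    calc ((k:ℝ)+1) * aA k * aB k ≤ ((k:ℝ)+1) * aA k * 1 :=
          mul_le_mul_of_nonneg_left h2 (by positivity)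
      _ = ((k:ℝ)+1) * aA k := mul_one _
      _ ≤ ((k:ℝ)+1) * (1/2)^k := mul_le_mul_of_nonneg_left h1 hk1
  have hcsum : Summable c := by
    refine Summable.of_nonneg_of_le (fun k => (hcpos k).le) hcu ?_
    exact summable_aux
  set coefA : ℕ → ℂ := fun k => (c k : ℂ) / (1 - fourier (n k) A) with hcoefA
  set coefB : ℕ → ℂ := fun k => (c k : ℂ) / (1 - fourier (n k) B) with hcoefB
  have hcoefAnorm : ∀ k, ‖coefA k‖ ≤ u k := by
    intro k
    rw [hcoefA]
    rw [norm_div, Complex.norm_real, Real.norm_eq_abs, abs_of_pos (hcpos k)]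
    rw [show ‖(1:ℂ) - fourier (n k) A‖ = aA k from rfl]
    rw [div_le_iff₀ (haApos k)]
    calc c k = ((k:ℝ)+1) * aA k * aB k := rfl
      _ = (((k:ℝ)+1) * aB k) * aA k := by ring
      _ ≤ u k * aA k := by
          apply mul_le_mul_of_nonneg_right _ (haApos k).le
          calc ((k:ℝ)+1) * aB k ≤ ((k:ℝ)+1) * (1/2)^k :=
                mul_le_mul_of_nonneg_left (haBlt k).le (by positivity)
            _ = u k := rfl
  have hcoefBnorm : ∀ k, ‖coefB k‖ ≤ u k := by
    intro k
    rw [hcoefB]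
    rw [norm_div, Complex.norm_real, Real.norm_eq_abs, abs_of_pos (hcpos k)]
    rw [show ‖(1:ℂ) - fourier (n k) B‖ = aB k from rfl]
    rw [div_le_iff₀ (haBpos k)]
    calc c k = ((k:ℝ)+1) * aA k * aB k := rfl
      _ = (((k:ℝ)+1) * aA k) * aB k := by ring
      _ ≤ u k * aB k := by
          apply mul_le_mul_of_nonneg_right _ (haBpos k).le
          calc ((k:ℝ)+1) * aA k ≤ ((k:ℝ)+1) * (1/2)^k :=
                mul_le_mul_of_nonneg_left (haAlt k).le (by positivity)
            _ = u k := rfl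
  have husum : Summable u := summable_aux
  -- summability of the various series
  have hsumA : ∀ x : UnitAddCircle, Summable (fun k => coefA k * fourier (n k) x) := by
    intro x
    apply Summable.of_norm
    refine Summable.of_nonneg_of_le (fun k => norm_nonneg _) (fun k => ?_) husum
    rw [norm_mul, norm_fourier_val, mul_one]
    exact hcoefAnorm k
  have hsumB : ∀ x : UnitAddCircle, Summable (fun k => coefB k * fourier (n k) x) := by
    intro x
    apply Summable.of_norm
    refine Summable.of_nonneg_of_le (fun k => norm_nonneg _) (fun k => ?_) husum
    rw [norm_mul, norm_fourier_val, mul_one]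
    exact hcoefBnorm k
  -- the functions
  set ψ : UnitAddCircle → ℂ := fun x => ∑' k, (c k : ℂ) * fourier (n k) x with hψ
  have hcontf : Continuous (fun x : UnitAddCircle => ∑' k, coefA k * fourier (n k) x) := by
    apply continuous_tsum (fun k => continuous_const.mul (fourier (n k)).continuous) husum
    intro k x
    rw [Pi.mul_apply, norm_mul, norm_fourier_val, mul_one]
    exact hcoefAnorm k
  have hcontg : Continuous (fun x : UnitAddCircle => ∑' k, coefB k * fourier (n k) x) := by
    apply continuous_tsum (fun k => continuous_const.mul (fourier (n k)).continuous) husum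
    intro k x
    rw [Pi.mul_apply, norm_mul, norm_fourier_val, mul_one]
    exact hcoefBnorm k
  -- the coboundary identities
  have hkeyA : ∀ x : UnitAddCircle,
      (∑' k, coefA k * fourier (n k) x) - (∑' k, coefA k * fourier (n k) (x + A)) = ψ x := by
    intro x
    rw [hψ, ← Summable.tsum_sub (hsumA x) (hsumA (x + A))]
    refine tsum_congr fun k => ?_
    rw [fourier_add_arg]
    have h1 : coefA k * (1 - fourier (n k) A) = (c k : ℂ) := by
      rw [hcoefA]
      exact div_mul_cancel₀ _ (hAne k)
    linear_combination (fourier (n k) x : ℂ) * h1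
  have hkeyB : ∀ x : UnitAddCircle,
      (∑' k, coefB k * fourier (n k) x) - (∑' k, coefB k * fourier (n k) (x + B)) = ψ x := by
    intro x
    rw [hψ, ← Summable.tsum_sub (hsumB x) (hsumB (x + B))]
    refine tsum_congr fun k => ?_
    rw [fourier_add_arg]
    have h1 : coefB k * (1 - fourier (n k) B) = (c k : ℂ) := by
      rw [hcoefB]
      exact div_mul_cancel₀ _ (hBne k)
    linear_combination (fourier (n k) x : ℂ) * h1
  refine ⟨⟨fun x => ∑' k, coefA k * fourier (n k) x, hcontf⟩,
    ⟨fun x => ∑' k, coefB k * fourier (n k) x, hcontg⟩, ?_, ?_⟩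
  · intro x
    simp only [ContinuousMap.coe_mk]
    rw [hkeyA x, hkeyB x]
  · rintro ⟨h, hint, hae⟩
    simp only [ContinuousMap.coe_mk] at hae
    have haeψ : (fun x => h x - h (x + A) - h (x + B) + h (x + A + B)) =ᵐ[volume] ψ :=
      hae.trans (Filter.Eventually.of_forall fun x => hkeyA x)
    -- Fourier coefficients of h
    set Φ : ℕ → ℂ := fun k => ∫ x, (fourier (-(n k)) x : ℂ) * h x with hΦ
    have hBnd : ∀ k, ‖Φ k‖ ≤ ∫ x, ‖h x‖ := by
      intro k
      rw [hΦ]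
      calc ‖∫ x, (fourier (-(n k)) x : ℂ) * h x‖
          ≤ ∫ x, ‖(fourier (-(n k)) x : ℂ) * h x‖ := norm_integral_le_integral_norm _
        _ = ∫ x, ‖h x‖ := by
            congr 1; funext x; rw [norm_mul, norm_fourier_val, one_mul]
    have hintA := hint.comp_add_right A
    have hintB := hint.comp_add_right B
    have hintAB := hint.comp_add_right (A + B)
    have hmul2 : ∀ (v : UnitAddCircle → ℂ), Integrable v volume → ∀ m : ℤ,
        Integrable (fun x => (fourier m x : ℂ) * v x) volume := by
      intro v hv m
      exact hv.bdd_mul (map_continuous (fourier m)).aestronglyMeasurable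
        (Filter.Eventually.of_forall fun x => le_of_eq (norm_fourier_val m x))
    -- the integral of the left-hand side against a character
    have hLHS : ∀ k, ∫ x, (fourier (-(n k)) x : ℂ) *
        (h x - h (x + A) - h (x + B) + h (x + A + B))
        = (1 - fourier (n k) A) * (1 - fourier (n k) B) * Φ k := by
      intro k
      have hi1 := hmul2 _ hint (-(n k))
      have hi2 := hmul2 _ hintA (-(n k))
      have hi3 := hmul2 _ hintB (-(n k))
      have hi4 := hmul2 _ hintAB (-(n k))
      have e0 : (fun x => (fourier (-(n k)) x : ℂ) *
          (h x - h (x + A) - h (x + B) + h (x + A + B)))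
          = fun x => ((fourier (-(n k)) x : ℂ) * h x - (fourier (-(n k)) x : ℂ) * h (x + A)
            - (fourier (-(n k)) x : ℂ) * h (x + B)
            + (fourier (-(n k)) x : ℂ) * h (x + (A + B))) := by
        funext x
        rw [← add_assoc x A B]
        ring
      rw [e0]
      have hi12 : Integrable (fun x : UnitAddCircle =>
          (fourier (-(n k)) x : ℂ) * h x - (fourier (-(n k)) x : ℂ) * h (x + A)) volume :=
        hi1.sub hi2
      have hi123 : Integrable (fun x : UnitAddCircle =>
          (fourier (-(n k)) x : ℂ) * h x - (fourier (-(n k)) x : ℂ) * h (x + A)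
            - (fourier (-(n k)) x : ℂ) * h (x + B)) volume := hi12.sub hi3
      rw [integral_add hi123 hi4, integral_sub hi12 hi3, integral_sub hi1 hi2]
      rw [integral_fourier_translate (n k) h A, integral_fourier_translate (n k) h B,
        integral_fourier_translate (n k) h (A + B), fourier_add_arg]
      rw [hΦ]
      ring
    -- the integral of ψ against a character
    have hRHS : ∀ k, ∫ x, (fourier (-(n k)) x : ℂ) * ψ x = (c k : ℂ) := by
      intro k
      have e1 : ∀ x : UnitAddCircle, (fourier (-(n k)) x : ℂ) * ψ x
          = ∑' j, (c j : ℂ) * fourier (n j - n k) x := by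
        intro x
        rw [hψ, ← tsum_mul_left]
        refine tsum_congr fun j => ?_
        have h4 : (fourier (n j - n k) x : ℂ) = fourier (n j) x * fourier (-(n k)) x := by
          rw [sub_eq_add_neg, fourier_add]
        rw [h4]; ring
      simp_rw [e1]
      rw [integral_tsum
        (f := fun j x => (c j : ℂ) * fourier (n j - n k) x)
        (fun j => ((continuous_const.mul (map_continuous (fourier (n j - n k)))).aestronglyMeasurable)) ?_]
      · have e2 : ∀ j, ∫ x : UnitAddCircle, (c j : ℂ) * (fourier (n j - n k) x : ℂ)
            = if j = k then (c k : ℂ) else 0 := by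
          intro j
          rw [integral_const_mul, integral_fourier]
          by_cases hjk : j = k
          · subst hjk; simp
          · have hne2 : n j - n k ≠ 0 := sub_ne_zero_of_ne fun e => hjk (hmono.injective e)
            simp [hne2, hjk]
        simp_rw [e2]
        exact tsum_ite_eq k (fun _ => (c k : ℂ))
      · have e3 : ∀ j, ∫⁻ x : UnitAddCircle, ‖(c j : ℂ) * (fourier (n j - n k) x : ℂ)‖₊ ∂volume
            = (‖c j‖₊ : ENNReal) := by
          intro j
          have e4 : ∀ x : UnitAddCircle,
              (‖(c j : ℂ) * (fourier (n j - n k) x : ℂ)‖₊ : ENNReal) = (‖c j‖₊ : ENNReal) := by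
            intro x
            rw [nnnorm_mul, nnnorm_fourier_val, mul_one]
            congr 1
            exact NNReal.coe_injective (by rw [coe_nnnorm, coe_nnnorm, Complex.norm_real])
          simp_rw [e4]
          rw [lintegral_const]
          simp [AddCircle.measure_univ]
        simp_rw [enorm_eq_nnnorm, e3]
        have hsum : Summable (fun j => ‖c j‖₊) := by
          rw [← NNReal.summable_coe]
          refine hcsum.congr fun j => ?_
          rw [coe_nnnorm, Real.norm_eq_abs, abs_of_pos (hcpos j)]
        exact ENNReal.tsum_coe_ne_top_iff_summable.mpr hsum
    -- conclusion: the Fourier coefficients of h are unbounded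
    have hcontr : ∀ k, ‖Φ k‖ = (k:ℝ) + 1 := by
      intro k
      have h1 : (1 - fourier (n k) A) * (1 - fourier (n k) B) * Φ k = (c k : ℂ) := by
        rw [← hLHS k, ← hRHS k]
        exact integral_congr_ae ((Filter.EventuallyEq.refl _ _).mul haeψ)
      have h2 := congrArg norm h1
      rw [norm_mul, norm_mul, Complex.norm_real, Real.norm_eq_abs, abs_of_pos (hcpos k)] at h2
      have hprod : 0 < aA k * aB k := mul_pos (haApos k) (haBpos k)
      apply mul_left_cancel₀ hprod.ne'
      have h2' : aA k * aB k * ‖Φ k‖ = c k := h2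
      have h3 : c k = aA k * aB k * ((k:ℝ) + 1) := by rw [hc]; ring
      rw [h2', h3]
    obtain ⟨K, hK⟩ := exists_nat_gt (∫ x, ‖h x‖)
    have hfin := hBnd K
    rw [hcontr K] at hfin
    linarith
end

section
/- Let f ∈ L_2(𝕋) have Fourier coefficients satisfying liminf_{|n|→∞} |n·f̂_n| > 0 (i.e. there exist c > 0 and N such that |n·f̂_n| ≥ c whenever |n| ≥ N). Then for every irrational β there is no h ∈ L_1(𝕋) with f = (I−T_β)h almost everywhere. -/
open MeasureTheory

instance Real.fact_zero_lt_one : Fact ((0 : ℝ) < 1) := ⟨zero_lt_one⟩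

open AddCircle Filter Topology
open scoped ENNReal Real

noncomputable section

namespace Stmt16Aux

lemma norm_fourierCoeff_le (f : UnitAddCircle → ℂ) (n : ℤ) :
    ‖fourierCoeff f n‖ ≤ ∫ t, ‖f t‖ ∂haarAddCircle := by
  refine le_trans (norm_integral_le_integral_norm _) (le_of_eq ?_)
  congr 1
  ext t
  simp [norm_smul, fourier_apply, Circle.norm_coe]

lemma fourierCoeff_congr_ae {f g : UnitAddCircle → ℂ} (h : f =ᵐ[haarAddCircle] g) (n : ℤ) :
    fourierCoeff f n = fourierCoeff g n :=
  integral_congr_ae (h.mono fun x hx => by simp only [hx])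

lemma integrable_fourier_smul {f : UnitAddCircle → ℂ} (hf : Integrable f haarAddCircle) (n : ℤ) :
    Integrable (fun t => fourier n t • f t) haarAddCircle := by
  refine hf.bdd_mul ((map_continuous (fourier n)).aestronglyMeasurable) (c := 1) (Eventually.of_forall fun t => ?_)
  simp [fourier_apply, Circle.norm_coe]

lemma fourierCoeff_sub {f g : UnitAddCircle → ℂ} (hf : Integrable f haarAddCircle)
    (hg : Integrable g haarAddCircle) (n : ℤ) :
    fourierCoeff (fun x => f x - g x) n = fourierCoeff f n - fourierCoeff g n := by
  simp only [fourierCoeff, smul_sub]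
  exact integral_sub (integrable_fourier_smul hf _) (integrable_fourier_smul hg _)

lemma fourierCoeff_shift (h : UnitAddCircle → ℂ) (a : UnitAddCircle) (n : ℤ) :
    fourierCoeff (fun x => h (x + a)) n = fourier n a * fourierCoeff h n := by
  have key : ∀ x : UnitAddCircle, fourier (-n) x • h (x + a)
      = (fun y => fourier n a * (fourier (-n) y • h y)) (x + a) := by
    intro x
    simp only [smul_eq_mul, ← mul_assoc]
    congr 1
    have harg : n • a + (-n) • (x + a) = (-n) • x := by
      rw [neg_smul, neg_smul, smul_add]; abel
    rw [fourier_apply, fourier_apply, fourier_apply, ← Circle.coe_mul, ← toCircle_add, harg]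
  calc fourierCoeff (fun x => h (x + a)) n
      = ∫ x, (fun y => fourier n a * (fourier (-n) y • h y)) (x + a) ∂haarAddCircle := by
        simp only [fourierCoeff]; exact integral_congr_ae (Eventually.of_forall key)
    _ = ∫ y, fourier n a * (fourier (-n) y • h y) ∂haarAddCircle := by
        exact integral_add_right_eq_self (fun y => fourier n a * (fourier (-n) y • h y)) a
    _ = fourier n a * fourierCoeff h n := integral_const_mul _ _

lemma summable_sq_fourierCoeff {g : UnitAddCircle → ℂ} (hg : MemLp g 2 haarAddCircle) :
    Summable fun n => ‖fourierCoeff g n‖ ^ 2 := by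
  have h1 := lp.memℓp ((fourierBasis (T := 1)).repr (hg.toLp g))
  have h2 := h1.summable (p := 2) (by norm_num)
  have h3 : ∀ n : ℤ, ‖(fourierBasis.repr (hg.toLp g)) n‖ ^ (2 : ℝ≥0∞).toReal
      = ‖fourierCoeff g n‖ ^ 2 := by
    intro n
    rw [fourierBasis_repr, fourierCoeff_congr_ae (MemLp.coeFn_toLp hg) n]
    norm_num
  simpa only [h3] using h2

/-- The Riemann–Lebesgue lemma on the circle. -/
lemma tendsto_fourierCoeff_cofinite {h : UnitAddCircle → ℂ}
    (hh : Integrable h haarAddCircle) :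
    Tendsto (fourierCoeff h) cofinite (𝓝 0) := by
  rw [Metric.tendsto_nhds]
  intro ε hε
  obtain ⟨g, -, hgle, hgcont, hgint⟩ :=
    hh.exists_hasCompactSupport_integral_sub_le (show (0:ℝ) < ε/4 by positivity)
  have hg2 : MemLp g 2 haarAddCircle :=
    hgcont.memLp_of_hasCompactSupport (isClosed_tsupport g).isCompact
  have hsum := (summable_sq_fourierCoeff hg2).tendsto_cofinite_zero
  have hev : ∀ᶠ n in cofinite, ‖fourierCoeff g n‖ ^ 2 < (ε/2) ^ 2 := by
    have := hsum.eventually (eventually_lt_nhds (show (0:ℝ) < (ε/2)^2 by positivity))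
    simpa using this
  filter_upwards [hev] with n hn
  rw [dist_zero_right]
  have hb : ‖fourierCoeff g n‖ < ε / 2 :=
    lt_of_pow_lt_pow_left₀ 2 (by positivity) hn
  have hdiff : ‖fourierCoeff h n - fourierCoeff g n‖ ≤ ε / 4 := by
    rw [← fourierCoeff_sub hh hgint]
    exact (norm_fourierCoeff_le _ n).trans hgle
  calc ‖fourierCoeff h n‖ ≤ ‖fourierCoeff h n - fourierCoeff g n‖ + ‖fourierCoeff g n‖ := by
        simpa using norm_add_le (fourierCoeff h n - fourierCoeff g n) (fourierCoeff g n)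
    _ < ε/4 + ε/2 := add_lt_add_of_le_of_lt hdiff hb
    _ < ε := by linarith

lemma eventually_cofinite_int {P : ℤ → Prop} (hP : ∀ᶠ n in cofinite, P n) :
    ∃ K : ℕ, ∀ n : ℤ, (K : ℤ) ≤ |n| → P n := by
  have hfin : {n : ℤ | ¬ P n}.Finite := hP
  obtain ⟨M, hM⟩ := (hfin.image (fun n => |n|)).bddAbove
  refine ⟨(M + 1).toNat, fun n hn => ?_⟩
  by_contra hc
  have h1 : |n| ≤ M := hM (Set.mem_image_of_mem _ hc)
  have h2 : (M + 1 : ℤ) ≤ ((M + 1).toNat : ℤ) := Int.self_le_toNat _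
  omega

lemma exists_good_denom (β : ℝ) (hβ : Irrational β) (B : ℕ) :
    ∃ q : ℚ, |β - (q : ℝ)| < 1 / (q.den : ℝ) ^ 2 ∧ B ≤ q.den := by
  by_contra hcon
  push_neg at hcon
  refine Real.infinite_rat_abs_sub_lt_one_div_den_sq_of_irrational hβ ?_
  set M : ℤ := ⌈(1 + |β|) * B⌉
  have hsub : {q : ℚ | |β - (q : ℝ)| < 1 / (q.den : ℝ) ^ 2} ⊆
      (fun p : ℤ × ℕ => ((p.1 : ℚ) / (p.2 : ℚ))) '' (Set.Icc (-M) M ×ˢ Set.Icc 0 B) := by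
    intro q hq
    have hq' : |β - (q : ℝ)| < 1 / (q.den : ℝ) ^ 2 := hq
    have hden : q.den < B := hcon q hq'
    have hden1 : (1 : ℝ) ≤ (q.den : ℝ) := by exact_mod_cast q.pos
    have hsq : 1 / (q.den : ℝ) ^ 2 ≤ 1 := by
      rw [div_le_one (by positivity)]
      nlinarith
    have hqabs : |(q : ℝ)| ≤ 1 + |β| := by
      have := abs_sub_abs_le_abs_sub (q : ℝ) β
      rw [abs_sub_comm] at this
      linarith [hq'.le.trans hsq]
    have hnum : |(q.num : ℝ)| ≤ (1 + |β|) * (B : ℝ) := by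
      have hcast : (q : ℝ) = (q.num : ℝ) / (q.den : ℝ) := Rat.cast_def q
      have : |(q.num : ℝ)| = |(q : ℝ)| * (q.den : ℝ) := by
        rw [hcast, abs_div, abs_of_pos (by positivity : (0:ℝ) < (q.den : ℝ))]
        field_simp
      rw [this]
      have hBpos : (q.den : ℝ) ≤ (B : ℝ) := by exact_mod_cast hden.le
      have h0 : (0:ℝ) ≤ |(q:ℝ)| := abs_nonneg _
      nlinarith
    have hnumM : |q.num| ≤ M := by
      have h1 : ((1 + |β|) * (B:ℝ)) ≤ (M : ℝ) := Int.le_ceil _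
      have : |(q.num : ℝ)| ≤ (M : ℝ) := hnum.trans h1
      exact_mod_cast (by rwa [← Int.cast_abs] at this : ((|q.num| : ℤ) : ℝ) ≤ (M : ℝ))
    refine ⟨(q.num, q.den), ⟨Set.mem_Icc.2 ⟨neg_le_of_abs_le hnumM, le_of_abs_le hnumM⟩,
      Set.mem_Icc.2 ⟨Nat.zero_le _, hden.le⟩⟩, ?_⟩
    simp [Rat.num_div_den]
  exact Set.Finite.subset (((Set.finite_Icc _ _).prod (Set.finite_Icc _ _)).image _) hsub

end Stmt16Aux

end

open Stmt16Aux

/-- Let `f ∈ L₂(𝕋)` have Fourier coefficients satisfying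
`liminf_{|n|→∞} |n·f̂_n| > 0` (i.e. there exist `c > 0` and `N` such that `|n·f̂_n| ≥ c` whenever
`|n| ≥ N`). Then for every irrational `β` there is no `h ∈ L₁(𝕋)` with `f = (I−T_β)h` almost
everywhere. -/
theorem stmt16 (f : UnitAddCircle → ℂ) (hf : MemLp f 2 volume)
    (hcoeff : ∃ c : ℝ, 0 < c ∧ ∃ N : ℕ, ∀ n : ℤ, (N : ℤ) ≤ |n| →
      c ≤ (|n| : ℝ) * ‖fourierCoeff f n‖)
    (β : ℝ) (hβ : Irrational β) :
    ¬ ∃ h : UnitAddCircle → ℂ, Integrable h volume ∧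
      f =ᵐ[volume] fun x => h x - h (x + (β : UnitAddCircle)) := by
  rintro ⟨h, hint, heq⟩
  obtain ⟨c, hc, N, hN⟩ := hcoeff
  have hπ : (0 : ℝ) < π := Real.pi_pos
  have hvol : (volume : Measure UnitAddCircle) = haarAddCircle := by
    rw [AddCircle.volume_eq_smul_haarAddCircle]; simp
  rw [hvol] at hint heq
  have hshift : Integrable (fun x => h (x + (β : UnitAddCircle))) haarAddCircle :=
    hint.comp_add_right _
  have hco : ∀ n : ℤ, fourierCoeff f n
      = (1 - fourier n ((β : ℝ) : UnitAddCircle)) * fourierCoeff h n := by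
    intro n
    rw [fourierCoeff_congr_ae heq n, fourierCoeff_sub hint hshift,
      fourierCoeff_shift h ((β : ℝ) : UnitAddCircle) n]
    ring
  have hev : ∀ᶠ n in cofinite, ‖fourierCoeff h n‖ < c / (4 * π) := by
    have hRL := tendsto_fourierCoeff_cofinite hint
    rw [Metric.tendsto_nhds] at hRL
    simpa [dist_zero_right] using hRL (c / (4 * π)) (by positivity)
  obtain ⟨K, hK⟩ := eventually_cofinite_int hev
  obtain ⟨q, hq, hden⟩ := exists_good_denom β hβ (max (max N K) 7)
  set n : ℕ := q.den with hn
  have hn7 : 7 ≤ n := le_trans (le_max_right _ _) hden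
  have hnN : N ≤ n := le_trans ((le_max_left _ _).trans (le_max_left _ _)) hden
  have hnK : K ≤ n := le_trans ((le_max_right _ _).trans (le_max_left _ _)) hden
  have hn0 : 0 < n := q.pos
  have hn0' : (0:ℝ) < (n : ℝ) := by exact_mod_cast hn0
  set m : ℤ := q.num with hm
  set δ : ℝ := (n : ℝ) * β - (m : ℝ) with hδ
  have happrox : |δ| < 1 / (n : ℝ) := by
    have hcast : (q : ℝ) = (m : ℝ) / (n : ℝ) := Rat.cast_def q
    have h1 : δ = (n:ℝ) * (β - (q:ℝ)) := by rw [hδ, hcast]; field_simp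
    rw [h1, abs_mul, abs_of_pos hn0']
    calc (n:ℝ) * |β - (q:ℝ)| < (n:ℝ) * (1 / (n:ℝ)^2) := mul_lt_mul_of_pos_left hq hn0'
      _ = 1 / (n:ℝ) := by field_simp
  have hδ7 : |δ| < 1 / 7 :=
    happrox.trans_le (one_div_le_one_div_of_le (by norm_num) (by exact_mod_cast hn7))
  have hz : ‖(2 * (π:ℂ) * Complex.I * (δ:ℂ))‖ = 2 * π * |δ| := by
    simp only [norm_mul, Complex.norm_I, Complex.norm_real, Real.norm_eq_abs, Complex.norm_two]
    rw [abs_of_pos hπ]; ring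
  have hz1 : ‖(2 * (π:ℂ) * Complex.I * (δ:ℂ))‖ ≤ 1 := by
    rw [hz]
    have hπlt : π < 3.15 := Real.pi_lt_d2
    nlinarith [abs_nonneg δ]
  have hexp : fourier (n : ℤ) ((β : ℝ) : UnitAddCircle)
      = Complex.exp (2 * (π:ℂ) * Complex.I * (δ:ℂ)) := by
    rw [fourier_coe_apply]
    have harg : (2 * (π:ℂ) * Complex.I * ((n:ℤ):ℂ) * (β:ℂ) / ((1:ℝ):ℂ))
        = 2 * (π:ℂ) * Complex.I * (δ:ℂ) + (m:ℂ) * (2 * (π:ℂ) * Complex.I) := by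
      rw [hδ]; push_cast; ring
    rw [harg, Complex.exp_add]
    have : Complex.exp ((m:ℂ) * (2 * (π:ℂ) * Complex.I)) = 1 :=
      Complex.exp_int_mul_two_pi_mul_I m
    rw [this, mul_one]
  have hbound : ‖1 - fourier (n:ℤ) ((β:ℝ) : UnitAddCircle)‖ ≤ 4 * π * |δ| := by
    rw [hexp, norm_sub_rev]
    calc ‖(Complex.exp (2 * (π:ℂ) * Complex.I * (δ:ℂ)) - 1)‖
        ≤ 2 * ‖(2 * (π:ℂ) * Complex.I * (δ:ℂ))‖ := Complex.norm_exp_sub_one_le hz1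
      _ = 4 * π * |δ| := by rw [hz]; ring
  have hNle : (N : ℤ) ≤ |(n : ℤ)| := by
    rw [Int.abs_natCast]
    exact_mod_cast hnN
  have hmain := hN (n : ℤ) hNle
  rw [hco, norm_mul] at hmain
  have habs : |(((n : ℕ) : ℤ) : ℝ)| = (n : ℝ) := by
    rw [Int.cast_natCast]; exact abs_of_nonneg hn0'.le
  rw [habs] at hmain
  have hsmall : ‖fourierCoeff h (n:ℤ)‖ < c / (4 * π) := by
    refine hK _ ?_
    rw [Int.abs_natCast]
    exact_mod_cast hnK
  set E := ‖1 - fourier (n:ℤ) ((β:ℝ) : UnitAddCircle)‖ with hE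
  set x := ‖fourierCoeff h (n:ℤ)‖ with hx
  have hxnn : (0:ℝ) ≤ x := norm_nonneg _
  have hEnn : (0:ℝ) ≤ E := norm_nonneg _
  have step1 : E * x ≤ (4 * π * |δ|) * x := mul_le_mul_of_nonneg_right hbound hxnn
  have step2 : (n:ℝ) * (E * x) ≤ (n:ℝ) * ((4 * π * |δ|) * x) :=
    mul_le_mul_of_nonneg_left step1 hn0'.le
  have step4 : (n:ℝ) * |δ| ≤ 1 := by
    have := mul_lt_mul_of_pos_left happrox hn0'
    rw [mul_one_div, div_self hn0'.ne'] at this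
    exact this.le
  have step5 : (n:ℝ) * ((4 * π * |δ|) * x) ≤ 4 * π * x := by
    have h1 : (n:ℝ) * ((4 * π * |δ|) * x) = (4 * π * x) * ((n:ℝ) * |δ|) := by ring
    rw [h1]
    calc (4 * π * x) * ((n:ℝ) * |δ|) ≤ (4 * π * x) * 1 :=
          mul_le_mul_of_nonneg_left step4 (by positivity)
      _ = 4 * π * x := mul_one _
  have step6 : 4 * π * x < c := by
    have := mul_lt_mul_of_pos_left hsmall (show (0:ℝ) < 4 * π by positivity)
    rwa [mul_div_cancel₀ _ (show (4:ℝ) * π ≠ 0 by positivity)] at this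
  linarith [hmain, step2, step5, step6]
end

section
/- Let T and S be commuting mean ergodic contractions on a Banach space X. Then the following are equivalent: (i) the subspace (I−T)X + (I−S)X is closed in X; (ii) (1/n²)·Σ_{k=0}^{n−1} Σ_{j=0}^{n−1} T^k S^j converges in operator norm as n → ∞; (iii) (1/(nm))·Σ_{k=0}^{n−1} Σ_{j=0}^{m−1} T^k S^j converges in operator norm as min(n,m) → ∞. -/
open Filter Topology Finset

set_option maxHeartbeats 1000000
set_option synthInstance.maxHeartbeats 400000

section Aux

variable {X : Type*} [NormedAddCommGroup X] [NormedSpace ℝ X]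

noncomputable def birk (T : X →L[ℝ] X) (n : ℕ) : X →L[ℝ] X :=
  (n : ℝ)⁻¹ • ∑ k ∈ Finset.range n, T ^ k

lemma birk_apply (T : X →L[ℝ] X) (n : ℕ) (x : X) :
    birk T n x = (n : ℝ)⁻¹ • ∑ k ∈ Finset.range n, (T ^ k) x := by
  simp [birk, ContinuousLinearMap.sum_apply]

lemma pow_norm_le {T : X →L[ℝ] X} (hT : ‖T‖ ≤ 1) (k : ℕ) : ‖T ^ k‖ ≤ 1 := by
  induction k with
  | zero => rw [pow_zero]; exact ContinuousLinearMap.norm_id_le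
  | succ k ih =>
    rw [pow_succ]
    exact le_trans (norm_mul_le _ _) (by nlinarith [norm_nonneg (T ^ k), norm_nonneg T])

lemma norm_birk_le {T : X →L[ℝ] X} (hT : ‖T‖ ≤ 1) (n : ℕ) : ‖birk T n‖ ≤ 1 := by
  have h1 : ‖∑ k ∈ Finset.range n, T ^ k‖ ≤ n := by
    calc ‖∑ k ∈ Finset.range n, T ^ k‖ ≤ ∑ k ∈ Finset.range n, ‖T ^ k‖ :=
          norm_sum_le _ _
      _ ≤ ∑ _k ∈ Finset.range n, (1 : ℝ) :=
          Finset.sum_le_sum fun k _ => pow_norm_le hT k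
      _ = n := by simp
  rw [birk]
  calc ‖(n : ℝ)⁻¹ • ∑ k ∈ Finset.range n, T ^ k‖
      ≤ ‖(n : ℝ)⁻¹‖ * ‖∑ k ∈ Finset.range n, T ^ k‖ := ContinuousLinearMap.opNorm_smul_le _ _
    _ ≤ (n : ℝ)⁻¹ * n := by
        apply mul_le_mul _ h1 (norm_nonneg _) (by positivity)
        simp [abs_of_nonneg]
    _ ≤ 1 := by
        rcases Nat.eq_zero_or_pos n with h | h
        · simp [h]
        · rw [inv_mul_cancel₀ (by exact_mod_cast h.ne' : (n : ℝ) ≠ 0)]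

lemma commute_birk {R T : X →L[ℝ] X} (h : Commute R T) (n : ℕ) : Commute R (birk T n) :=
  Commute.smul_right (Commute.sum_right _ _ _ fun k _ => h.pow_right k) _

lemma birk_mul_one_sub (T : X →L[ℝ] X) (n : ℕ) :
    birk T n * (1 - T) = (n : ℝ)⁻¹ • (1 - T ^ n) := by
  rw [birk, smul_mul_assoc]
  congr 1
  rw [Finset.sum_mul]
  have h : ∀ k, T ^ k * (1 - T) = T ^ k - T ^ (k + 1) := fun k => by
    rw [mul_sub, mul_one, pow_succ]
  simp_rw [h]
  rw [Finset.sum_range_sub' (fun k => T ^ k), pow_zero]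

lemma one_sub_birk (T : X →L[ℝ] X) {n : ℕ} (hn : 1 ≤ n) :
    (1 : X →L[ℝ] X) - birk T n =
      (1 - T) * ((n : ℝ)⁻¹ • ∑ k ∈ Finset.range n, ∑ i ∈ Finset.range k, T ^ i) := by
  have hne : (n : ℝ) ≠ 0 := by exact_mod_cast (Nat.one_le_iff_ne_zero.mp hn)
  rw [mul_smul_comm, Finset.mul_sum]
  have inner : ∀ k, (1 - T) * ∑ i ∈ Finset.range k, T ^ i = 1 - T ^ k := fun k => by
    rw [Finset.mul_sum]
    have h : ∀ i, (1 - T) * T ^ i = T ^ i - T ^ (i + 1) := fun i => by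
      rw [sub_mul, one_mul, pow_succ']
    simp_rw [h]
    rw [Finset.sum_range_sub' (fun i => T ^ i), pow_zero]
  simp_rw [inner]
  rw [Finset.sum_sub_distrib, Finset.sum_const, Finset.card_range, smul_sub]
  congr 1
  rw [← Nat.cast_smul_eq_nsmul ℝ, smul_smul, inv_mul_cancel₀ hne, one_smul]

lemma birk_fix {T : X →L[ℝ] X} {e : X} (he : T e = e) {n : ℕ} (hn : 1 ≤ n) :
    birk T n e = e := by
  have hne : (n : ℝ) ≠ 0 := by exact_mod_cast (Nat.one_le_iff_ne_zero.mp hn)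
  have hk : ∀ k, (T ^ k) e = e := fun k => by
    induction k with
    | zero => simp
    | succ k ih => rw [pow_succ, ContinuousLinearMap.mul_apply, he, ih]
  rw [birk_apply]
  simp_rw [hk]
  rw [Finset.sum_const, Finset.card_range, ← Nat.cast_smul_eq_nsmul ℝ, smul_smul,
    inv_mul_cancel₀ hne, one_smul]

lemma double_eq (T S : X →L[ℝ] X) (n m : ℕ) :
    ((n : ℝ) * (m : ℝ))⁻¹ •
        ∑ k ∈ Finset.range n, ∑ j ∈ Finset.range m, T ^ k * S ^ j =
      birk T n * birk S m := by
  rw [birk, birk, smul_mul_assoc, mul_smul_comm, smul_smul, ← Finset.sum_mul_sum,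
    mul_inv]

lemma exists_limit_op {T : X →L[ℝ] X} (hT : ‖T‖ ≤ 1)
    (hme : ∀ x : X, ∃ y : X,
      Tendsto (fun n : ℕ => (n : ℝ)⁻¹ • ∑ k ∈ Finset.range n, (T ^ k) x) atTop (𝓝 y)) :
    ∃ P : X →L[ℝ] X, ∀ x, Tendsto (fun n => birk T n x) atTop (𝓝 (P x)) := by
  have hb : ∀ x : X, Tendsto (fun n => birk T n x) atTop (𝓝 ((hme x).choose)) := fun x => by
    refine (hme x).choose_spec.congr fun n => ?_
    rw [birk_apply]
  set g : X → X := fun x => (hme x).choose with hg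
  have hadd : ∀ a b, g (a + b) = g a + g b := fun a b =>
    tendsto_nhds_unique (hb (a + b))
      (((hb a).add (hb b)).congr fun n => (map_add (birk T n) a b).symm)
  have hsmul : ∀ (c : ℝ) (a : X), g (c • a) = c • g a := fun c a =>
    tendsto_nhds_unique (hb (c • a))
      (((hb a).const_smul c).congr fun n => ((birk T n).map_smul c a).symm)
  set L : X →ₗ[ℝ] X :=
    { toFun := g, map_add' := hadd, map_smul' := hsmul } with hL
  have hbound : ∀ x, ‖L x‖ ≤ 1 * ‖x‖ := fun x => by
    refine le_of_tendsto (hb x).norm (Eventually.of_forall fun n => ?_)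
    calc ‖birk T n x‖ ≤ ‖birk T n‖ * ‖x‖ := (birk T n).le_opNorm x
      _ ≤ 1 * ‖x‖ := mul_le_mul_of_nonneg_right (norm_birk_le hT n) (norm_nonneg x)
  exact ⟨L.mkContinuous 1 hbound, fun x => hb x⟩

lemma tendsto_corr {T : X →L[ℝ] X} (hT : ‖T‖ ≤ 1) (x : X) :
    Tendsto (fun n : ℕ => (n : ℝ)⁻¹ • (x - (T ^ n) x)) atTop (𝓝 0) := by
  apply squeeze_zero_norm (a := fun n : ℕ => (n : ℝ)⁻¹ * (2 * ‖x‖))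
  · intro n
    rw [norm_smul]
    apply mul_le_mul _ _ (norm_nonneg _) (by positivity)
    · simp
    · calc ‖x - (T ^ n) x‖ ≤ ‖x‖ + ‖(T ^ n) x‖ := norm_sub_le _ _
        _ ≤ ‖x‖ + ‖x‖ := by
            have h1 := (T ^ n).le_opNorm x
            have h2 := pow_norm_le hT n
            nlinarith [norm_nonneg x]
        _ = 2 * ‖x‖ := by ring
  · have h := (tendsto_inv_atTop_zero.comp
      (tendsto_natCast_atTop_atTop (R := ℝ))).mul_const (2 * ‖x‖)
    simpa using h

lemma limit_ap {T P : X →L[ℝ] X} (hT : ‖T‖ ≤ 1)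
    (hP : ∀ x, Tendsto (fun n => birk T n x) atTop (𝓝 (P x))) (x : X) :
    P (T x) = P x := by
  have key : ∀ n : ℕ, birk T n (T x) = birk T n x - (n : ℝ)⁻¹ • (x - (T ^ n) x) := by
    intro n
    have h := congrArg (fun A : X →L[ℝ] X => A x) (birk_mul_one_sub T n)
    simp only [ContinuousLinearMap.mul_apply, ContinuousLinearMap.smul_apply,
      ContinuousLinearMap.sub_apply, ContinuousLinearMap.one_apply, map_sub] at h
    rw [← h]; abel
  refine tendsto_nhds_unique (hP (T x)) ?_
  have h := (hP x).sub (tendsto_corr hT x)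
  rw [sub_zero] at h
  exact h.congr fun n => (key n).symm

lemma limit_comm {T P R : X →L[ℝ] X}
    (hP : ∀ x, Tendsto (fun n => birk T n x) atTop (𝓝 (P x)))
    (hc : Commute R T) (x : X) : R (P x) = P (R x) := by
  have h1 : Tendsto (fun n => R (birk T n x)) atTop (𝓝 (R (P x))) :=
    (R.continuous.tendsto _).comp (hP x)
  have h2 : ∀ n, R (birk T n x) = birk T n (R x) := fun n => by
    have h := congrArg (fun A : X →L[ℝ] X => A x) (commute_birk hc n).eq
    simpa [ContinuousLinearMap.mul_apply] using h
  exact tendsto_nhds_unique (h1.congr h2) (hP (R x))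

lemma limit_fix {T P : X →L[ℝ] X} (hT : ‖T‖ ≤ 1)
    (hP : ∀ x, Tendsto (fun n => birk T n x) atTop (𝓝 (P x))) (x : X) :
    T (P x) = P x := by
  rw [limit_comm hP (Commute.refl T) x, limit_ap hT hP x]

lemma one_sub_birk_apply (T : X →L[ℝ] X) {n : ℕ} (hn : 1 ≤ n) (x : X) :
    x - birk T n x =
      (1 - T) (((n : ℝ)⁻¹ • ∑ k ∈ Finset.range n, ∑ i ∈ Finset.range k, T ^ i) x) := by
  have h := congrArg (fun A : X →L[ℝ] X => A x) (one_sub_birk T hn)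
  simpa only [ContinuousLinearMap.mul_apply, ContinuousLinearMap.sub_apply,
    ContinuousLinearMap.one_apply] using h

lemma sub_limit_mem_closure {T P : X →L[ℝ] X}
    (hP : ∀ x, Tendsto (fun n => birk T n x) atTop (𝓝 (P x)))
    {Mset : Set X} (hM : ∀ u : X, (1 - T) u ∈ Mset) (x : X) :
    x - P x ∈ closure Mset := by
  refine mem_closure_of_tendsto (tendsto_const_nhds.sub (hP x)) ?_
  filter_upwards [eventually_ge_atTop 1] with n hn
  rw [one_sub_birk_apply T hn x]
  exact hM _
lemma birk_one_sub_norm {T : X →L[ℝ] X} (hT : ‖T‖ ≤ 1) (n : ℕ) :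
    ‖birk T n * (1 - T)‖ ≤ 2 * (n : ℝ)⁻¹ := by
  rw [birk_mul_one_sub]
  calc ‖(n : ℝ)⁻¹ • ((1 : X →L[ℝ] X) - T ^ n)‖
      ≤ ‖(n : ℝ)⁻¹‖ * ‖(1 : X →L[ℝ] X) - T ^ n‖ := ContinuousLinearMap.opNorm_smul_le _ _
    _ ≤ (n : ℝ)⁻¹ * 2 := by
        apply mul_le_mul _ _ (norm_nonneg _) (by positivity)
        · simp
        · calc ‖(1 : X →L[ℝ] X) - T ^ n‖ ≤ ‖(1 : X →L[ℝ] X)‖ + ‖T ^ n‖ := norm_sub_le _ _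
            _ ≤ 1 + 1 := add_le_add ContinuousLinearMap.norm_id_le (pow_norm_le hT n)
            _ = 2 := by norm_num
    _ = 2 * (n : ℝ)⁻¹ := mul_comm _ _

lemma D_on_M {T S : X →L[ℝ] X} (hT : ‖T‖ ≤ 1) (hS : ‖S‖ ≤ 1) (hc : Commute T S)
    (n m : ℕ) (x y : X) :
    ‖(birk T n * birk S m) ((1 - T) x + (1 - S) y)‖ ≤
      2 * (n : ℝ)⁻¹ * ‖x‖ + 2 * (m : ℝ)⁻¹ * ‖y‖ := by
  have hcomm : Commute (birk S m) (1 - T) :=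
    (Commute.one_right (birk S m)).sub_right ((commute_birk hc m).symm)
  have e1 : birk T n * birk S m * (1 - T) = birk T n * (1 - T) * birk S m := by
    rw [mul_assoc, hcomm.eq, ← mul_assoc]
  have k1 : ‖(birk T n * birk S m) ((1 - T) x)‖ ≤ 2 * (n : ℝ)⁻¹ * ‖x‖ := by
    have : (birk T n * birk S m) ((1 - T) x) = (birk T n * birk S m * (1 - T)) x := by
      simp [ContinuousLinearMap.mul_apply]
    rw [this, e1]
    calc ‖(birk T n * (1 - T) * birk S m) x‖
        ≤ ‖birk T n * (1 - T) * birk S m‖ * ‖x‖ := ContinuousLinearMap.le_opNorm _ _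
      _ ≤ (2 * (n : ℝ)⁻¹ * 1) * ‖x‖ := by
          apply mul_le_mul_of_nonneg_right _ (norm_nonneg x)
          calc ‖birk T n * (1 - T) * birk S m‖
              ≤ ‖birk T n * (1 - T)‖ * ‖birk S m‖ := norm_mul_le _ _
            _ ≤ 2 * (n : ℝ)⁻¹ * 1 := by
                apply mul_le_mul (birk_one_sub_norm hT n) (norm_birk_le hS m)
                  (norm_nonneg _) (by positivity)
      _ = 2 * (n : ℝ)⁻¹ * ‖x‖ := by ring
  have k2 : ‖(birk T n * birk S m) ((1 - S) y)‖ ≤ 2 * (m : ℝ)⁻¹ * ‖y‖ := by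
    have : (birk T n * birk S m) ((1 - S) y) = (birk T n * (birk S m * (1 - S))) y := by
      simp [ContinuousLinearMap.mul_apply]
    rw [this]
    calc ‖(birk T n * (birk S m * (1 - S))) y‖
        ≤ ‖birk T n * (birk S m * (1 - S))‖ * ‖y‖ := ContinuousLinearMap.le_opNorm _ _
      _ ≤ (1 * (2 * (m : ℝ)⁻¹)) * ‖y‖ := by
          apply mul_le_mul_of_nonneg_right _ (norm_nonneg y)
          calc ‖birk T n * (birk S m * (1 - S))‖
              ≤ ‖birk T n‖ * ‖birk S m * (1 - S)‖ := norm_mul_le _ _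
            _ ≤ 1 * (2 * (m : ℝ)⁻¹) := by
                apply mul_le_mul (norm_birk_le hT n) (birk_one_sub_norm hS m)
                  (norm_nonneg _) (by positivity)
      _ = 2 * (m : ℝ)⁻¹ * ‖y‖ := by ring
  calc ‖(birk T n * birk S m) ((1 - T) x + (1 - S) y)‖
      ≤ ‖(birk T n * birk S m) ((1 - T) x)‖ + ‖(birk T n * birk S m) ((1 - S) y)‖ := by
        rw [map_add]; exact norm_add_le _ _
    _ ≤ 2 * (n : ℝ)⁻¹ * ‖x‖ + 2 * (m : ℝ)⁻¹ * ‖y‖ := add_le_add k1 k2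

end Aux

section Main

variable {X : Type*} [NormedAddCommGroup X] [NormedSpace ℝ X]
variable (T S : X →L[ℝ] X)

noncomputable def Phi : (X × X) →L[ℝ] X :=
  (1 - T).comp (ContinuousLinearMap.fst ℝ X X) + (1 - S).comp (ContinuousLinearMap.snd ℝ X X)

lemma Phi_apply (p : X × X) : Phi T S p = (1 - T) p.1 + (1 - S) p.2 := by
  simp [Phi]

noncomputable def Msub : Submodule ℝ X := LinearMap.range (Phi T S : (X × X) →ₗ[ℝ] X)

lemma setM_eq : {w : X | ∃ x y : X, w = (1 - T) x + (1 - S) y} = (Msub T S : Set X) := by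
  ext w
  simp only [Set.mem_setOf_eq, Msub, SetLike.mem_coe, LinearMap.mem_range]
  constructor
  · rintro ⟨x, y, rfl⟩
    exact ⟨(x, y), Phi_apply T S (x, y)⟩
  · rintro ⟨p, rfl⟩
    exact ⟨p.1, p.2, (Phi_apply T S p).symm⟩

lemma mem_Msub_left (u : X) : (1 - T) u ∈ Msub T S :=
  ⟨(u, 0), by simp [Phi_apply]⟩

lemma mem_Msub_right (u : X) : (1 - S) u ∈ Msub T S :=
  ⟨(0, u), by simp [Phi_apply]⟩

end Main
section Main2

variable {X : Type*} [NormedAddCommGroup X] [NormedSpace ℝ X] [CompleteSpace X]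
variable {T S : X →L[ℝ] X}

lemma main_forward (hT : ‖T‖ ≤ 1) (hS : ‖S‖ ≤ 1) (hTS : T * S = S * T)
    (hTme : ∀ x : X, ∃ y : X,
      Tendsto (fun n : ℕ => (n : ℝ)⁻¹ • ∑ k ∈ Finset.range n, (T ^ k) x) atTop (𝓝 y))
    (hSme : ∀ x : X, ∃ y : X,
      Tendsto (fun n : ℕ => (n : ℝ)⁻¹ • ∑ k ∈ Finset.range n, (S ^ k) x) atTop (𝓝 y))
    (hclosed : IsClosed ((Msub T S : Set X))) :
    ∃ E : X →L[ℝ] X,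
      Tendsto (fun nm : ℕ × ℕ => birk T nm.1 * birk S nm.2) atTop (𝓝 E) := by
  have hc : Commute T S := hTS
  obtain ⟨P, hP⟩ := exists_limit_op hT hTme
  obtain ⟨Q, hQ⟩ := exists_limit_op hS hSme
  refine ⟨P.comp Q, ?_⟩
  have hET : ∀ z, T ((P.comp Q) z) = (P.comp Q) z := fun z => by
    simp only [ContinuousLinearMap.comp_apply]
    exact limit_fix hT hP (Q z)
  have hES : ∀ z, S ((P.comp Q) z) = (P.comp Q) z := fun z => by
    simp only [ContinuousLinearMap.comp_apply]
    rw [limit_comm hP hc.symm (Q z), limit_fix hS hQ z]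
  have hmem : ∀ z, z - (P.comp Q) z ∈ Msub T S := fun z => by
    have h1 : z - Q z ∈ closure (Msub T S : Set X) :=
      sub_limit_mem_closure hQ (mem_Msub_right T S) z
    have h2 : Q z - P (Q z) ∈ closure (Msub T S : Set X) :=
      sub_limit_mem_closure hP (mem_Msub_left T S) (Q z)
    rw [hclosed.closure_eq] at h1 h2
    have heq : z - (P.comp Q) z = (z - Q z) + (Q z - P (Q z)) := by
      simp only [ContinuousLinearMap.comp_apply]; abel
    rw [heq]
    exact (Msub T S).add_mem h1 h2
  haveI : CompleteSpace (Msub T S) := hclosed.completeSpace_coe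
  set Φ' : (X × X) →L[ℝ] (Msub T S) :=
    (Phi T S).codRestrict (Msub T S) (fun p => ⟨p, rfl⟩) with hΦ'
  have hsurj : Function.Surjective Φ' := by
    rintro ⟨w, hw⟩
    obtain ⟨p, hp⟩ := hw
    exact ⟨p, Subtype.ext hp⟩
  obtain ⟨C, Cpos, hC⟩ := ContinuousLinearMap.exists_preimage_norm_le Φ' hsurj
  set E := P.comp Q with hE
  have hbound : ∀ n m : ℕ, 1 ≤ n → 1 ≤ m →
      ‖birk T n * birk S m - E‖ ≤
        (2 * (n : ℝ)⁻¹ + 2 * (m : ℝ)⁻¹) * (C * (1 + ‖E‖)) := by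
    intro n m hn hm
    apply ContinuousLinearMap.opNorm_le_bound _ (by positivity)
    intro z
    have hEfix : (birk T n * birk S m) (E z) = E z := by
      rw [ContinuousLinearMap.mul_apply, birk_fix (hES z) hm, birk_fix (hET z) hn]
    have hdz : (birk T n * birk S m - E) z = (birk T n * birk S m) (z - E z) := by
      rw [map_sub, hEfix, ContinuousLinearMap.sub_apply]
    obtain ⟨p, hp, hpn⟩ := hC ⟨z - E z, hmem z⟩
    have hpe : Phi T S p = z - E z := congrArg Subtype.val hp
    have hwn : ‖(⟨z - E z, hmem z⟩ : Msub T S)‖ = ‖z - E z‖ := rfl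
    rw [hwn] at hpn
    have hzE : ‖z - E z‖ ≤ (1 + ‖E‖) * ‖z‖ := by
      calc ‖z - E z‖ ≤ ‖z‖ + ‖E z‖ := norm_sub_le _ _
        _ ≤ ‖z‖ + ‖E‖ * ‖z‖ := add_le_add le_rfl (E.le_opNorm z)
        _ = (1 + ‖E‖) * ‖z‖ := by ring
    have hp1 : ‖p.1‖ ≤ C * ((1 + ‖E‖) * ‖z‖) := by
      have : ‖p.1‖ ≤ ‖p‖ := norm_fst_le p
      calc ‖p.1‖ ≤ ‖p‖ := norm_fst_le p
        _ ≤ C * ‖z - E z‖ := hpn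
        _ ≤ C * ((1 + ‖E‖) * ‖z‖) := by
            exact mul_le_mul_of_nonneg_left hzE (le_of_lt Cpos)
    have hp2 : ‖p.2‖ ≤ C * ((1 + ‖E‖) * ‖z‖) := by
      calc ‖p.2‖ ≤ ‖p‖ := norm_snd_le p
        _ ≤ C * ‖z - E z‖ := hpn
        _ ≤ C * ((1 + ‖E‖) * ‖z‖) := by
            exact mul_le_mul_of_nonneg_left hzE (le_of_lt Cpos)
    have hkey := D_on_M hT hS hc n m p.1 p.2
    rw [← Phi_apply, hpe] at hkey
    rw [hdz]
    calc ‖(birk T n * birk S m) (z - E z)‖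
        ≤ 2 * (n : ℝ)⁻¹ * ‖p.1‖ + 2 * (m : ℝ)⁻¹ * ‖p.2‖ := hkey
      _ ≤ 2 * (n : ℝ)⁻¹ * (C * ((1 + ‖E‖) * ‖z‖)) +
            2 * (m : ℝ)⁻¹ * (C * ((1 + ‖E‖) * ‖z‖)) := by
          apply add_le_add
          · exact mul_le_mul_of_nonneg_left hp1 (by positivity)
          · exact mul_le_mul_of_nonneg_left hp2 (by positivity)
      _ = (2 * (n : ℝ)⁻¹ + 2 * (m : ℝ)⁻¹) * (C * (1 + ‖E‖)) * ‖z‖ := by ring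
  -- conclude
  rw [tendsto_iff_dist_tendsto_zero]
  apply squeeze_zero' (f := fun nm : ℕ × ℕ => dist (birk T nm.1 * birk S nm.2) E)
    (g := fun nm : ℕ × ℕ =>
      (2 * (nm.1 : ℝ)⁻¹ + 2 * (nm.2 : ℝ)⁻¹) * (C * (1 + ‖E‖)))
  · exact Eventually.of_forall fun nm => dist_nonneg
  · have hev : ∀ᶠ nm : ℕ × ℕ in atTop, 1 ≤ nm.1 ∧ 1 ≤ nm.2 := by
      rw [← prod_atTop_atTop_eq]
      exact Eventually.prod_mk (eventually_ge_atTop 1) (eventually_ge_atTop 1)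
    filter_upwards [hev] with nm hnm
    rw [dist_eq_norm]
    exact hbound nm.1 nm.2 hnm.1 hnm.2
  · have h1 : Tendsto (fun nm : ℕ × ℕ => (nm.1 : ℝ)⁻¹) atTop (𝓝 0) := by
      rw [← prod_atTop_atTop_eq]
      exact (tendsto_inv_atTop_zero.comp
        (tendsto_natCast_atTop_atTop (R := ℝ))).comp tendsto_fst
    have h2 : Tendsto (fun nm : ℕ × ℕ => (nm.2 : ℝ)⁻¹) atTop (𝓝 0) := by
      rw [← prod_atTop_atTop_eq]
      exact (tendsto_inv_atTop_zero.comp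
        (tendsto_natCast_atTop_atTop (R := ℝ))).comp tendsto_snd
    have h3 := (((h1.const_mul 2).add (h2.const_mul 2)).mul_const (C * (1 + ‖E‖)))
    simpa using h3

lemma main_backward (hT : ‖T‖ ≤ 1) (hS : ‖S‖ ≤ 1) (hTS : T * S = S * T)
    {L : X →L[ℝ] X}
    (hconv : Tendsto (fun n : ℕ => birk T n * birk S n) atTop (𝓝 L)) :
    IsClosed ((Msub T S : Set X)) := by
  have hc : Commute T S := hTS
  set Y := (Msub T S).topologicalClosure with hY
  have hYc : IsClosed (Y : Set X) := (Msub T S).isClosed_topologicalClosure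
  have hL0 : ∀ w ∈ (Y : Set X), L w = 0 := by
    have hM0 : ∀ w ∈ (Msub T S : Set X), L w = 0 := by
      rintro w ⟨p, rfl⟩
      have h1 : Tendsto (fun n : ℕ => (birk T n * birk S n) (Phi T S p)) atTop
          (𝓝 (L (Phi T S p))) := by
        exact ((ContinuousLinearMap.apply ℝ X (Phi T S p)).continuous.tendsto L).comp hconv
      have h2 : Tendsto (fun n : ℕ => (birk T n * birk S n) (Phi T S p)) atTop (𝓝 0) := by
        apply squeeze_zero_norm
          (a := fun n : ℕ => 2 * (n : ℝ)⁻¹ * ‖p.1‖ + 2 * (n : ℝ)⁻¹ * ‖p.2‖)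
        · intro n
          rw [Phi_apply]
          exact D_on_M hT hS hc n n p.1 p.2
        · have hinv : Tendsto (fun n : ℕ => (n : ℝ)⁻¹) atTop (𝓝 0) :=
            tendsto_inv_atTop_zero.comp (tendsto_natCast_atTop_atTop (R := ℝ))
          have := (((hinv.const_mul 2).mul_const ‖p.1‖).add
            ((hinv.const_mul 2).mul_const ‖p.2‖))
          simpa using this
      exact tendsto_nhds_unique h1 h2
    intro w hw
    have hsub : closure (Msub T S : Set X) ⊆ {w | L w = 0} :=
      closure_minimal hM0 (isClosed_eq L.continuous continuous_const)
    apply hsub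
    rwa [Submodule.topologicalClosure_coe] at hw
  obtain ⟨N₀, hN₀⟩ := Metric.tendsto_atTop.mp hconv (1 / 2) (by norm_num)
  set N := max N₀ 1 with hNdef
  have hN1 : 1 ≤ N := le_max_right _ _
  set D := birk T N * birk S N with hD
  have hDL : ‖D - L‖ < 1 / 2 := by
    have := hN₀ N (le_max_left _ _)
    rwa [dist_eq_norm] at this
  have hDY : ∀ w ∈ (Y : Set X), ‖D w‖ ≤ (1 / 2) * ‖w‖ := fun w hw => by
    have h0 : D w = (D - L) w := by
      rw [ContinuousLinearMap.sub_apply, hL0 w hw, sub_zero]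
    rw [h0]
    calc ‖(D - L) w‖ ≤ ‖D - L‖ * ‖w‖ := ContinuousLinearMap.le_opNorm _ _
      _ ≤ 1 / 2 * ‖w‖ := mul_le_mul_of_nonneg_right hDL.le (norm_nonneg w)
  have cDT : Commute D (1 - T) := by
    have c1 : Commute D T :=
      Commute.mul_left (commute_birk (Commute.refl T) N).symm (commute_birk hc N).symm
    exact (Commute.one_right D).sub_right c1
  have cDS : Commute D (1 - S) := by
    have c1 : Commute D S :=
      Commute.mul_left (commute_birk hc.symm N).symm (commute_birk (Commute.refl S) N).symm
    exact (Commute.one_right D).sub_right c1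
  have eDT : ∀ x, D ((1 - T) x) = (1 - T) (D x) := fun x => by
    have hh := congrArg (fun A : X →L[ℝ] X => A x) cDT.eq
    simpa [ContinuousLinearMap.mul_apply] using hh
  have eDS : ∀ x, D ((1 - S) x) = (1 - S) (D x) := fun x => by
    have hh := congrArg (fun A : X →L[ℝ] X => A x) cDS.eq
    simpa [ContinuousLinearMap.mul_apply] using hh
  have hDM : ∀ w ∈ (Msub T S : Set X), D w ∈ (Msub T S : Set X) := by
    rintro w ⟨p, rfl⟩
    refine ⟨(D p.1, D p.2), ?_⟩
    change Phi T S (D p.1, D p.2) = D (Phi T S p)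
    rw [Phi_apply, Phi_apply]
    simp only [map_add, eDT, eDS]
  have hDYY : ∀ w ∈ (Y : Set X), D w ∈ (Y : Set X) := by
    intro w hw
    rw [hY, Submodule.topologicalClosure_coe] at hw ⊢
    exact (Set.MapsTo.closure (fun x hx => hDM x hx) D.continuous) hw
  have hiter : ∀ (k : ℕ) (w : X), w ∈ (Y : Set X) →
      (D ^ k) w ∈ (Y : Set X) ∧ ‖(D ^ k) w‖ ≤ (1 / 2) ^ k * ‖w‖ := by
    intro k
    induction k with
    | zero => intro w hw; simpa using hw
    | succ k ih =>
      intro w hw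
      obtain ⟨h1, h2⟩ := ih w hw
      constructor
      · rw [pow_succ', ContinuousLinearMap.mul_apply]
        exact hDYY _ h1
      · rw [pow_succ', ContinuousLinearMap.mul_apply]
        calc ‖D ((D ^ k) w)‖ ≤ 1 / 2 * ‖(D ^ k) w‖ := hDY _ h1
          _ ≤ 1 / 2 * ((1 / 2) ^ k * ‖w‖) := by
              exact mul_le_mul_of_nonneg_left h2 (by norm_num)
          _ = (1 / 2) ^ (k + 1) * ‖w‖ := by ring
  have hsub : (Y : Set X) ⊆ (Msub T S : Set X) := by
    intro w hw
    have hsummable : Summable (fun k : ℕ => (D ^ k) w) := by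
      apply Summable.of_norm_bounded (g := fun k : ℕ => (1 / 2 : ℝ) ^ k * ‖w‖)
      · exact (summable_geometric_of_lt_one (by norm_num) (by norm_num)).mul_right ‖w‖
      · exact fun k => (hiter k w hw).2
    set u := ∑' k : ℕ, (D ^ k) w with hu
    have huY : u ∈ (Y : Set X) := by
      refine hYc.mem_of_tendsto hsummable.hasSum.tendsto_sum_nat
        (Eventually.of_forall fun K => ?_)
      exact Submodule.sum_mem Y fun k _ => (hiter k w hw).1
    have hDu : D u = u - w := by
      have h1 : D u = ∑' k : ℕ, (D ^ (k + 1)) w := by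
        rw [hu, D.map_tsum hsummable]
        exact tsum_congr fun k => by
          rw [← ContinuousLinearMap.mul_apply, ← pow_succ']
      have h2 : u = w + ∑' k : ℕ, (D ^ (k + 1)) w := by
        rw [hu, hsummable.tsum_eq_zero_add]
        simp
      rw [h1]
      rw [h2]
      abel
    have hwu : w = u - D u := by rw [hDu]; abel
    have hker : u - D u ∈ Msub T S := by
      have hop : (1 : X →L[ℝ] X) - D =
          (1 - birk T N) + birk T N * (1 - birk S N) := by
        rw [hD]; noncomm_ring
      have h1 : u - D u = ((1 - birk T N) + birk T N * (1 - birk S N)) u := by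
        rw [← hop, ContinuousLinearMap.sub_apply, ContinuousLinearMap.one_apply]
      rw [h1, ContinuousLinearMap.add_apply]
      apply (Msub T S).add_mem
      · rw [ContinuousLinearMap.sub_apply, ContinuousLinearMap.one_apply,
          one_sub_birk_apply T hN1 u]
        exact mem_Msub_left T S _
      · rw [ContinuousLinearMap.mul_apply, ContinuousLinearMap.sub_apply,
          ContinuousLinearMap.one_apply, one_sub_birk_apply S hN1 u]
        have c : Commute (birk T N) (1 - S) :=
          (Commute.one_right _).sub_right (commute_birk hc.symm N).symm
        have e : ∀ v, birk T N ((1 - S) v) = (1 - S) (birk T N v) := fun v => by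
          have hh := congrArg (fun A : X →L[ℝ] X => A v) c.eq
          simpa [ContinuousLinearMap.mul_apply] using hh
        rw [e]
        exact mem_Msub_right T S _
    rwa [← hwu] at hker
  have hEq : (Msub T S : Set X) = (Y : Set X) :=
    Set.Subset.antisymm ((Msub T S).le_topologicalClosure) hsub
  rw [hEq]
  exact hYc
end Main2

/-- Let `T` and `S` be commuting mean ergodic contractions on a Banach space
`X`. Then the following are equivalent: (i) the subspace `(I−T)X + (I−S)X` is closed in `X`;
(ii) `(1/n²)·Σ_{k<n} Σ_{j<n} T^k S^j` converges in operator norm as `n → ∞`;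
(iii) `(1/(nm))·Σ_{k<n} Σ_{j<m} T^k S^j` converges in operator norm as `min(n,m) → ∞`. -/
theorem stmt18 {X : Type*} [NormedAddCommGroup X] [NormedSpace ℝ X] [CompleteSpace X]
    (T S : X →L[ℝ] X) (hT : ‖T‖ ≤ 1) (hS : ‖S‖ ≤ 1) (hTS : T * S = S * T)
    (hTme : ∀ x : X, ∃ y : X,
      Tendsto (fun n : ℕ => (n : ℝ)⁻¹ • ∑ k ∈ Finset.range n, (T ^ k) x) atTop (𝓝 y))
    (hSme : ∀ x : X, ∃ y : X,
      Tendsto (fun n : ℕ => (n : ℝ)⁻¹ • ∑ k ∈ Finset.range n, (S ^ k) x) atTop (𝓝 y)) :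
    (IsClosed {w : X | ∃ x y : X, w = (1 - T) x + (1 - S) y} ↔
        ∃ E : X →L[ℝ] X,
          Tendsto (fun n : ℕ => (((n : ℝ)) ^ 2)⁻¹ •
              ∑ k ∈ Finset.range n, ∑ j ∈ Finset.range n, T ^ k * S ^ j)
            atTop (𝓝 E)) ∧
      (IsClosed {w : X | ∃ x y : X, w = (1 - T) x + (1 - S) y} ↔
        ∃ E : X →L[ℝ] X,
          Tendsto (fun nm : ℕ × ℕ => ((nm.1 : ℝ) * (nm.2 : ℝ))⁻¹ •
              ∑ k ∈ Finset.range nm.1, ∑ j ∈ Finset.range nm.2, T ^ k * S ^ j)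
            atTop (𝓝 E)) := by
  have hsetEq := setM_eq T S
  have hdiag : Tendsto (fun n : ℕ => ((n, n) : ℕ × ℕ)) atTop atTop := by
    rw [← prod_atTop_atTop_eq]
    exact tendsto_id.prodMk tendsto_id
  have hfun2 : ∀ n : ℕ, (((n : ℝ)) ^ 2)⁻¹ •
      ∑ k ∈ Finset.range n, ∑ j ∈ Finset.range n, T ^ k * S ^ j =
      birk T n * birk S n := fun n => by
    rw [← double_eq, sq]
  have hfun3 : ∀ nm : ℕ × ℕ, ((nm.1 : ℝ) * (nm.2 : ℝ))⁻¹ •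
      ∑ k ∈ Finset.range nm.1, ∑ j ∈ Finset.range nm.2, T ^ k * S ^ j =
      birk T nm.1 * birk S nm.2 := fun nm => double_eq T S nm.1 nm.2
  have fw : IsClosed {w : X | ∃ x y : X, w = (1 - T) x + (1 - S) y} →
      ∃ E : X →L[ℝ] X,
        Tendsto (fun nm : ℕ × ℕ => birk T nm.1 * birk S nm.2) atTop (𝓝 E) := by
    intro h
    rw [hsetEq] at h
    exact main_forward hT hS hTS hTme hSme h
  have bw : ∀ {L : X →L[ℝ] X},
      Tendsto (fun n : ℕ => birk T n * birk S n) atTop (𝓝 L) →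
      IsClosed {w : X | ∃ x y : X, w = (1 - T) x + (1 - S) y} := by
    intro L h
    rw [hsetEq]
    exact main_backward hT hS hTS h
  constructor
  · constructor
    · intro h
      obtain ⟨E, hE⟩ := fw h
      exact ⟨E, (hE.comp hdiag).congr fun n => (hfun2 n).symm⟩
    · rintro ⟨E, hE⟩
      exact bw (hE.congr fun n => hfun2 n)
  · constructor
    · intro h
      obtain ⟨E, hE⟩ := fw h
      exact ⟨E, hE.congr fun nm => (hfun3 nm).symm⟩
    · rintro ⟨E, hE⟩
      have h' := (hE.congr fun nm => hfun3 nm).comp hdiag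
      have h1 : Tendsto (fun n : ℕ => birk T n * birk S n) atTop (𝓝 E) := by
        exact h'
      exact bw h1
end
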